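/- arXiv:2402.11619 — 2 statements merged into one kernel-verified Lean document; each statement's English description precedes it below -/
import Mathlib

section
/- Assume e ∈ dcl(Σ) and fix a Lascar tuple b with e ∈ dcl(b). Let H be a subgroup of Aut_e(Σ) containing Autf_L(Σ, e) such that π_b[H] is a closed subgroup of Gal_L(Σ, e). Then for σ ∈ Aut_e(Σ), the following are equivalent: (a) σ ∈ H; (b) σ fixes all ≡^H-classes of all tuples of realizations of Σ; (c) σ fixes all ≡^H-classes of all finite tuples of realizations of Σ. Moreover, (a) and (b) are equivalent even without assuming π_b[H] closed. -/
/- Framework: relativized Lascar groups of a first-order theory over a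
hyperimaginary, following "Relativized Galois groups of first order theories
over a hyperimaginary" by H. Lee and J. Lee. -/

open FirstOrder Cardinal Pointwise

universe u

namespace RelLascar

variable {L : FirstOrder.Language.{u, u}} {M : Type u} [L.Structure M]

/-- The group of automorphisms of the monster model `M`. -/
instance : Group (M ≃[L] M) where
  mul f g := f.comp g
  one := FirstOrder.Language.Equiv.refl L M
  inv f := f.symm
  mul_assoc f g h := (FirstOrder.Language.Equiv.comp_assoc h g f).symm
  one_mul := FirstOrder.Language.Equiv.refl_comp
  mul_one := FirstOrder.Language.Equiv.comp_refl
  inv_mul_cancel := FirstOrder.Language.Equiv.symm_comp_self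

/-- Automorphisms act on the monster model. -/
instance : MulAction (M ≃[L] M) M where
  smul f x := f x
  one_smul _ := rfl
  mul_smul _ _ _ := rfl

@[simp] theorem autSmul_def (f : M ≃[L] M) (x : M) : f • x = f x := rfl

/-- The solution set in `M` of a set of formulas in variables `ι` with
parameters `prm : π → M`. -/
def SolSet {ι π : Type u} (p : Set (L.Formula (ι ⊕ π))) (prm : π → M) : Set (ι → M) :=
  {v | ∀ φ ∈ p, φ.Realize (Sum.elim v prm)}

/-- A set of `ι`-tuples is type-definable over the parameters `prm`. -/
def TypeDefinableOver {ι π : Type u} (prm : π → M) (X : Set (ι → M)) : Prop :=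
  ∃ p : Set (L.Formula (ι ⊕ π)), X = SolSet p prm

/-- Two tuples have the same (complete) type over `∅`. -/
def SameTp {ι : Type u} (c d : ι → M) : Prop :=
  ∀ φ : L.Formula ι, φ.Realize c ↔ φ.Realize d

/-- `M` is a monster model with degree of saturation and strong homogeneity `κ`:
`κ` is uncountable, tuples of size `< κ` with the same type are conjugate under an
automorphism, and every partial type in `< κ` variables over `< κ` parameters that
is finitely realized in `M` is realized in `M`.  ("Small" means of size `< κ`.) -/
def IsMonster (κ : Cardinal.{u}) (L : FirstOrder.Language.{u, u}) (M : Type u) [L.Structure M] : Prop :=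
  ℵ₀ < κ ∧
  (∀ (ι : Type u) (c d : ι → M), #ι < κ → SameTp (L := L) (M := M) c d →
      ∃ f : M ≃[L] M, ∀ i, f (c i) = d i) ∧
  (∀ (ι π : Type u) (prm : π → M) (p : Set (L.Formula (ι ⊕ π))), #ι < κ → #π < κ →
      (∀ q : Finset (L.Formula (ι ⊕ π)), ↑q ⊆ p →
        ∃ v : ι → M, ∀ φ ∈ (q : Set (L.Formula (ι ⊕ π))), φ.Realize (Sum.elim v prm)) →
      ∃ v : ι → M, v ∈ SolSet p prm)

variable (κ : Cardinal.{u})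

section Hyperimaginary

/- The hyperimaginary `e = a_E`, where `E` is the `∅`-type-definable equivalence
relation defined by the set of formulas `pE` and `a : γ → M`. -/
variable {γ : Type u} (pE : Set (L.Formula (γ ⊕ γ))) (a : γ → M)

/-- The relation defined by a set of formulas in variables `δ ⊕ δ` (with no
parameters); for `pE` this is the equivalence relation `E`. -/
def Frel {δ : Type u} (pF : Set (L.Formula (δ ⊕ δ))) (x y : δ → M) : Prop :=
  ∀ φ ∈ pF, φ.Realize (Sum.elim x y)

/-- The class of a tuple `x` under the relation defined by `pF`; for an
equivalence relation this is the hyperimaginary `x_F` (as a set of representatives). -/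
def Fclass {δ : Type u} (pF : Set (L.Formula (δ ⊕ δ))) (x : δ → M) : Set (δ → M) :=
  {y | Frel pF x y}

/-- `Aut_e(𝔠)`: the subgroup of automorphisms fixing the hyperimaginary
`e = a_E` setwise. -/
def AutE : Subgroup (M ≃[L] M) := MulAction.stabilizer (M ≃[L] M) (Fclass pE a)

/-- `Aut_e(𝔠)` as a group. -/
abbrev Ge := ↥(AutE pE a)

/-- The hyperimaginary `e` is definable over the tuple `t` (i.e. `e ∈ dcl(t)`):
every automorphism fixing `t` pointwise fixes `e`. -/
def eInDclTuple {ι : Type u} (t : ι → M) : Prop :=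
  ∀ f : M ≃[L] M, (∀ i, f (t i) = t i) → f ∈ AutE pE a

/-- The set of elements of `Aut_e(𝔠)` fixing pointwise some small elementary
substructure (model) `N` with `e ∈ dcl(N)`. -/
def modelFixers : Set (Ge pE a) :=
  {f | ∃ N : L.ElementarySubstructure M, #N < κ ∧
        (∀ g : M ≃[L] M, (∀ x ∈ N, g x = x) → g ∈ AutE pE a) ∧
        ∀ x ∈ N, (f : M ≃[L] M) x = x}

/-- `Autf_L(𝔠, e)`: the normal subgroup of `Aut_e(𝔠)` generated by the
pointwise stabilizers of small models `N` with `e ∈ dcl(N)`. -/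
def AutfL : Subgroup (Ge pE a) := Subgroup.normalClosure (modelFixers κ pE a)

/-- `c ≡ᴸ_e d` : the tuples have the same Lascar strong type over `e`. -/
def LEq {ι : Type u} (c d : ι → M) : Prop := ∃ f ∈ AutfL κ pE a, f • c = d

theorem LEq.refl {ι : Type u} (c : ι → M) : LEq κ pE a c c :=
  ⟨1, one_mem _, one_smul _ _⟩

theorem LEq.symm {ι : Type u} {c d : ι → M} (h : LEq κ pE a c d) : LEq κ pE a d c := by
  obtain ⟨f, hf, rfl⟩ := h
  exact ⟨f⁻¹, inv_mem hf, inv_smul_smul f c⟩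

theorem LEq.trans {ι : Type u} {c d e : ι → M} (h1 : LEq κ pE a c d)
    (h2 : LEq κ pE a d e) : LEq κ pE a c e := by
  obtain ⟨f, hf, rfl⟩ := h1
  obtain ⟨g, hg, rfl⟩ := h2
  exact ⟨g * f, mul_mem hg hf, (mul_smul g f c).symm ▸ rfl⟩

end Hyperimaginary

section Sigma

variable {γ : Type u} (pE : Set (L.Formula (γ ⊕ γ))) (a : γ → M)
variable {V β : Type u} {pS : Set (L.Formula (V ⊕ β))} {bp : β → M}

/-- The solution set `Σ(𝔠)` of the partial type `Σ` (given by formulas `pS` over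
the parameters `bp`). -/
abbrev Sol (pS : Set (L.Formula (V ⊕ β))) (bp : β → M) : Set (V → M) := SolSet pS bp

/-- The type of realizations of `Σ`. -/
abbrev SolT (pS : Set (L.Formula (V ⊕ β))) (bp : β → M) := ↥(Sol pS bp)

variable (pS bp) in
/-- The partial type `Σ` is `e`-invariant. -/
def SolInv : Prop := ∀ (g : Ge pE a) (v : V → M), v ∈ Sol pS bp → g • v ∈ Sol pS bp

/-- The restriction homomorphism `Aut_e(𝔠) → Perm(Σ(𝔠))`, `f ↦ f ↾ Σ(𝔠)`. -/
def resPerm (hInv : SolInv pE a pS bp) : Ge pE a →* Equiv.Perm (SolT pS bp) where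
  toFun g :=
    { toFun := fun v => ⟨g • (v : V → M), hInv g v v.2⟩
      invFun := fun v => ⟨g⁻¹ • (v : V → M), hInv g⁻¹ v v.2⟩
      left_inv := fun v => Subtype.ext (inv_smul_smul g (v : V → M))
      right_inv := fun v => Subtype.ext (smul_inv_smul g (v : V → M)) }
  map_one' := Equiv.ext fun v => Subtype.ext (one_smul (Ge pE a) (v : V → M))
  map_mul' g h := Equiv.ext fun v => Subtype.ext (mul_smul g h (v : V → M))

/-- `Aut_e(Σ) = {f ↾ Σ(𝔠) : f ∈ Aut_e(𝔠)}`, as a subgroup of the permutations of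
`Σ(𝔠)`. -/
def AutES (hInv : SolInv pE a pS bp) : Subgroup (Equiv.Perm (SolT pS bp)) :=
  (resPerm pE a hInv).range

/-- `Aut_e(Σ)` as a group. -/
abbrev GS (hInv : SolInv pE a pS bp) := ↥(AutES pE a hInv)

/-- The restriction map `ξ : Aut_e(𝔠) → Aut_e(Σ)`. -/
def toGS (hInv : SolInv pE a pS bp) : Ge pE a →* GS pE a hInv :=
  (resPerm pE a hInv).rangeRestrict

/-- A tuple of realizations of `Σ`, flattened to a tuple of elements of `M`. -/
def flat {ι : Type u} (c : ι → SolT pS bp) : ι × V → M := fun p => (c p.1 : V → M) p.2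

theorem flat_toGS_smul (hInv : SolInv pE a pS bp) {ι : Type u} (g : Ge pE a)
    (c : ι → SolT pS bp) : flat ((toGS pE a hInv g) • c) = g • flat c := rfl

theorem flat_smul_of_res (hInv : SolInv pE a pS bp) {ι : Type u} {τ : GS pE a hInv}
    {g : Ge pE a} (hg : resPerm pE a hInv g = ↑τ) (c : ι → SolT pS bp) :
    flat (τ • c) = g • flat c := by
  have : τ = toGS pE a hInv g := Subtype.ext hg.symm
  subst this
  rfl

/-- `Autf_L(Σ, e)`: the subgroup of `Aut_e(Σ)` consisting of those restricted
automorphisms `σ` such that every small tuple of realizations of `Σ` has the same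
Lascar strong type over `e` as its image under `σ`. -/
def AutfLS (hInv : SolInv pE a pS bp) : Subgroup (GS pE a hInv) where
  carrier := {σ | ∀ (ι : Type u), #ι < κ → ∀ c : ι → SolT pS bp,
      LEq κ pE a (flat c) (flat (σ • c))}
  one_mem' := by
    intro ι _ c
    rw [one_smul]
    exact LEq.refl κ pE a _
  mul_mem' := by
    intro σ τ hσ hτ ι hι c
    rw [mul_smul]
    exact LEq.trans κ pE a (hτ ι hι c) (hσ ι hι (τ • c))
  inv_mem' := by
    intro σ hσ ι hι c
    have h := hσ ι hι (σ⁻¹ • c)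
    rw [smul_inv_smul] at h
    exact LEq.symm κ pE a h

theorem AutfLS_normal (hInv : SolInv pE a pS bp) : (AutfLS κ pE a hInv).Normal := by
  constructor
  intro σ hσ τ ι hι c
  obtain ⟨g, hg⟩ := τ.2
  have hginv : resPerm pE a hInv g⁻¹ = ↑τ⁻¹ := by
    rw [map_inv, hg]
    rfl
  obtain ⟨f, hf, hfe⟩ := hσ ι hι (τ⁻¹ • c)
  refine ⟨g * f * g⁻¹, (Subgroup.normalClosure_normal).conj_mem f hf g, ?_⟩
  have h1 : flat (τ⁻¹ • c) = g⁻¹ • flat c := flat_smul_of_res pE a hInv hginv c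
  have h2 : flat ((τ * σ * τ⁻¹) • c) = g • flat (σ • τ⁻¹ • c) := by
    rw [mul_smul, mul_smul]
    exact flat_smul_of_res pE a hInv hg _
  rw [h2, ← hfe, h1, ← mul_smul, ← mul_smul]

/-- The relativized Lascar group `Gal_L(Σ, e) = Aut_e(Σ) / Autf_L(Σ, e)`. -/
def GalL (hInv : SolInv pE a pS bp) := GS pE a hInv ⧸ AutfLS κ pE a hInv

/-- The projection `π_b : Aut_e(Σ) → Gal_L(Σ, e)`. -/
def projb (hInv : SolInv pE a pS bp) : GS pE a hInv → GalL κ pE a hInv :=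
  QuotientGroup.mk

/-- The projection `π_Σ : Aut_e(𝔠) → Gal_L(Σ, e)`. -/
def projS (hInv : SolInv pE a pS bp) : Ge pE a → GalL κ pE a hInv :=
  fun g => projb κ pE a hInv (toGS pE a hInv g)

/-- A Lascar tuple in `Σ` over `e`: a small tuple `b` of realizations of `Σ` such
that `Autf_L(Σ, e) = {σ ∈ Aut_e(Σ) : b ≡ᴸ_e σ(b)}`. -/
def IsLascarTuple (hInv : SolInv pE a pS bp) {ιb : Type u} (b : ιb → SolT pS bp) : Prop :=
  #ιb < κ ∧ ∀ σ : GS pE a hInv,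
    σ ∈ AutfLS κ pE a hInv ↔ LEq κ pE a (flat b) (flat (σ • b))

variable (pS bp) in
/-- `e ∈ dcl(Σ)`: there is a small tuple of realizations of `Σ` over which `e` is
definable. -/
def eInDclSigma : Prop :=
  ∃ (ι : Type u) (c : ι → SolT pS bp), #ι < κ ∧ eInDclTuple pE a (flat c)

/-- The complete type of the tuple `v` over the parameters `prm` (with both
indexed by `ι`): the set of formulas realized by `v` with parameters `prm`. -/
def tpOver {ι : Type u} (prm v : ι → M) : Set (L.Formula (ι ⊕ ι)) :=
  {φ | φ.Realize (Sum.elim v prm)}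

/-- The type space `S_b(b) = {tp(f(b)/b) : f ∈ Aut_e(𝔠)}` over a tuple `b` of
realizations of `Σ`. -/
def Sb {ιb : Type u} (b : ιb → SolT pS bp) :
    Set (Set (L.Formula ((ιb × V) ⊕ (ιb × V)))) :=
  Set.range fun g : Ge pE a => tpOver (flat b) (g • flat b)

/-- The logic topology on a set of types: the subspace topology induced from the
product topology on `Formula → Bool` via characteristic functions. -/
noncomputable def typeSetTop {F : Type u} (X : Set (Set F)) : TopologicalSpace ↥X :=
  TopologicalSpace.induced
    (fun p (φ : F) => (p : Set F).boolIndicator φ) inferInstance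

/-- The map `ν_b : S_b(b) → Gal_L(Σ, e)`, `tp(σ(b)/b) ↦ [σ]`. -/
noncomputable def nub (hInv : SolInv pE a pS bp) {ιb : Type u} (b : ιb → SolT pS bp) :
    ↥(Sb pE a b) → GalL κ pE a hInv :=
  fun p => projS κ pE a hInv (Set.mem_range.mp p.2).choose

/-- The topology `𝔱_b` on the relativized Lascar group `Gal_L(Σ, e)`: the quotient
topology induced by `ν_b` from the logic topology on `S_b(b)`. -/
noncomputable def galTopb (hInv : SolInv pE a pS bp) {ιb : Type u}
    (b : ιb → SolT pS bp) : TopologicalSpace (GalL κ pE a hInv) :=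
  (typeSetTop (Sb pE a b)).coinduced (nub κ pE a hInv b)

end Sigma

section GalT

variable {γ : Type u} (pE : Set (L.Formula (γ ⊕ γ))) (a : γ → M)

/-- The Lascar group `Gal_L(T, e) = Aut_e(𝔠) / Autf_L(𝔠, e)`. -/
def GalT := Ge pE a ⧸ AutfL κ pE a

/-- The projection `π : Aut_e(𝔠) → Gal_L(T, e)`. -/
def projT : Ge pE a → GalT κ pE a := QuotientGroup.mk

/-- The type space `S_N(N) = {tp(f(N)/N) : f ∈ Aut_e(𝔠)}` over a small model `N`. -/
def SMod (N : L.ElementarySubstructure M) : Set (Set (L.Formula (↥N ⊕ ↥N))) :=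
  Set.range fun g : Ge pE a =>
    tpOver (Subtype.val : ↥N → M) (g • (Subtype.val : ↥N → M))

/-- The map `ν : S_N(N) → Gal_L(T, e)`, `tp(f(N)/N) ↦ [f]`. -/
noncomputable def nuT (N : L.ElementarySubstructure M) :
    ↥(SMod pE a N) → GalT κ pE a :=
  fun p => projT κ pE a (Set.mem_range.mp p.2).choose

/-- The standard quotient topology on the Lascar group `Gal_L(T, e)` induced via
the type space over a small model `N` (with `e ∈ dcl(N)`). -/
noncomputable def galTopT (N : L.ElementarySubstructure M) :
    TopologicalSpace (GalT κ pE a) :=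
  (typeSetTop (SMod pE a N)).coinduced (nuT κ pE a N)

/-- `Autf_KP(𝔠, e)`: the preimage under `π` of the closure of the identity in
`Gal_L(T, e)`. -/
noncomputable def AutfKPset (N : L.ElementarySubstructure M) : Set (Ge pE a) :=
  projT κ pE a ⁻¹' (@closure _ (galTopT κ pE a N) {projT κ pE a 1})

/-- `Autf_S(𝔠, e)`: the preimage under `π` of the connected component of the
identity in `Gal_L(T, e)`. -/
noncomputable def AutfSset (N : L.ElementarySubstructure M) : Set (Ge pE a) :=
  projT κ pE a ⁻¹' (@connectedComponent _ (galTopT κ pE a N) (projT κ pE a 1))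

/-- `c ≡ᴷᴾ_e d` : the tuples have the same KP strong type over `e`. -/
def KPeq (N : L.ElementarySubstructure M) {ι : Type u} (c d : ι → M) : Prop :=
  ∃ f ∈ AutfKPset κ pE a N, f • c = d

/-- `c ≡ˢ_e d` : the tuples have the same Shelah strong type over `e`. -/
def Seq (N : L.ElementarySubstructure M) {ι : Type u} (c d : ι → M) : Prop :=
  ∃ f ∈ AutfSset κ pE a N, f • c = d

end GalT

section Relativized

variable {γ : Type u} (pE : Set (L.Formula (γ ⊕ γ))) (a : γ → M)
variable {V β : Type u} {pS : Set (L.Formula (V ⊕ β))} {bp : β → M}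

/-- `Autf_KP(Σ, e)`: the set of restricted automorphisms fixing the KP strong
type of every small tuple of realizations of `Σ`. -/
noncomputable def AutfKPSset (hInv : SolInv pE a pS bp) (N : L.ElementarySubstructure M) :
    Set (GS pE a hInv) :=
  {σ | ∀ (ι : Type u), #ι < κ → ∀ c : ι → SolT pS bp,
      KPeq κ pE a N (flat c) (flat (σ • c))}

/-- `Autf_S(Σ, e)`: the set of restricted automorphisms fixing the Shelah strong
type of every small tuple of realizations of `Σ`. -/
noncomputable def AutfSSset (hInv : SolInv pE a pS bp) (N : L.ElementarySubstructure M) :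
    Set (GS pE a hInv) :=
  {σ | ∀ (ι : Type u), #ι < κ → ∀ c : ι → SolT pS bp,
      Seq κ pE a N (flat c) (flat (σ • c))}

/-- The orbit under `Aut_e(𝔠)` of the hyperimaginary given by the class of `x`
under the relation defined by `pF` is small ("`x_F` is bounded over `e`"). -/
def BoundedClass {δ : Type u} (pF : Set (L.Formula (δ ⊕ δ))) (x : δ → M) : Prop :=
  #↥(Set.range fun g : Ge pE a => g • Fclass pF x) < κ

/-- The orbit under `Aut_e(𝔠)` of the hyperimaginary given by the class of `x` is
finite ("`x_F` is algebraic over `e`"). -/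
def FiniteClass {δ : Type u} (pF : Set (L.Formula (δ ⊕ δ))) (x : δ → M) : Prop :=
  (Set.range fun g : Ge pE a => g • Fclass pF x).Finite

/-- `f` fixes the hyperimaginary given by the class of `x` (setwise). -/
def FixesClass (f : Ge pE a) {δ : Type u} (pF : Set (L.Formula (δ ⊕ δ)))
    (x : δ → M) : Prop :=
  f • Fclass pF x = Fclass pF x

variable (pS bp) in
/-- `f` fixes every hyperimaginary that is bounded over `e` and has a
representative which is a small tuple of realizations of `Σ`, i.e. `f` fixes
`bdd(e) ∩ Σ` pointwise. -/
def fixesAllBddS (f : Ge pE a) : Prop :=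
  ∀ (ι : Type u) (pF : Set (L.Formula ((ι × V) ⊕ (ι × V)))) (c : ι → SolT pS bp),
    #ι < κ → Equivalence (Frel (M := M) pF) → BoundedClass κ pE a pF (flat c) →
    FixesClass pE a f pF (flat c)

variable (pS bp) in
/-- `f` fixes every hyperimaginary that is algebraic over `e` and has a
representative which is a small tuple of realizations of `Σ`, i.e. `f` fixes
`acl(e) ∩ Σ` pointwise. -/
def fixesAllAclS (f : Ge pE a) : Prop :=
  ∀ (ι : Type u) (pF : Set (L.Formula ((ι × V) ⊕ (ι × V)))) (c : ι → SolT pS bp),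
    #ι < κ → Equivalence (Frel (M := M) pF) → FiniteClass pE a pF (flat c) →
    FixesClass pE a f pF (flat c)

end Relativized


section More

variable {γ : Type u} (pE : Set (L.Formula (γ ⊕ γ))) (a : γ → M)
variable {V β : Type u} {pS : Set (L.Formula (V ⊕ β))} {bp : β → M}

theorem mem_AutfLS_iff (hInv : SolInv pE a pS bp) {σ : GS pE a hInv} :
    σ ∈ AutfLS κ pE a hInv ↔ ∀ (ι : Type u), #ι < κ → ∀ c : ι → SolT pS bp,
      LEq κ pE a (flat c) (flat (σ • c)) := Iff.rfl

theorem toGS_mem_autfLS (hInv : SolInv pE a pS bp) {f : Ge pE a}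
    (hf : f ∈ AutfL κ pE a) : toGS pE a hInv f ∈ AutfLS κ pE a hInv :=
  (mem_AutfLS_iff κ pE a hInv).mpr
    (fun ι _ c => ⟨f, hf, (flat_toGS_smul pE a hInv f c).symm⟩)

instance AutfL_normal : (AutfL κ pE a).Normal :=
  Subgroup.normalClosure_normal

/-- The group structure of the relativized Lascar group `Gal_L(Σ, e)`. -/
noncomputable def galLGroup (hInv : SolInv pE a pS bp) : Group (GalL κ pE a hInv) :=
  @QuotientGroup.Quotient.group _ _ (AutfLS κ pE a hInv) (AutfLS_normal κ pE a hInv)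

/-- The natural projection `ξ_L : Gal_L(T, e) → Gal_L(Σ, e)`. -/
noncomputable def xiL (hInv : SolInv pE a pS bp) : GalT κ pE a → GalL κ pE a hInv :=
  haveI := AutfLS_normal κ pE a hInv
  ⇑(QuotientGroup.map (AutfL κ pE a) (AutfLS κ pE a hInv) (toGS pE a hInv)
    (fun _ hf => Subgroup.mem_comap.mpr (toGS_mem_autfLS κ pE a hInv hf)))

/-- The orbit equivalence relation `≡ᴴ` of a set `H` of restricted automorphisms,
on tuples of realizations of `Σ`. -/
def orbEq {hInv : SolInv pE a pS bp} (H : Set (GS pE a hInv)) {ι : Type u}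
    (c d : ι → SolT pS bp) : Prop :=
  ∃ h ∈ H, h • c = d

end More

/-! If `h(b) = σ(b)` for some `h ∈ H`, then `h⁻¹σ` fixes the Lascar tuple `b`, so it lies in
`Autf_L(Σ, e) ≤ H`; hence `σ ∈ H`. For finite tuples one uses that `π_b[H]` is closed: its
preimage under `ν_b` is closed in `S_b(b)`, and `tp(σ(b)/b)` lies in the closure of that
preimage, since a basic neighbourhood of it mentions only finitely many coordinates of `b`,
on which `σ` agrees with some `h ∈ H`. That `ν_b(tp(h(b)/b)) = π_b(h)` rests on the strong
homogeneity of `𝔠` together with `e ∈ dcl(b)`. -/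

theorem _root_.Set.boolIndicator_eq_boolIndicator {α : Type*} {s t : Set α} {x : α}
    (h : x ∈ s ↔ x ∈ t) : s.boolIndicator x = t.boolIndicator x :=
  Bool.eq_iff_iff.mpr <| by
    rw [← Set.mem_iff_boolIndicator, ← Set.mem_iff_boolIndicator]
    exact h

theorem _root_.FirstOrder.Language.BoundedFormula.realize_congr_freeVar {L : FirstOrder.Language}
    {M : Type*} [L.Structure M] {α : Type*} [DecidableEq α] {n : ℕ} (φ : L.BoundedFormula α n)
    {v w : α → M} (h : ∀ x ∈ φ.freeVarFinset, v x = w x) {xs : Fin n → M} :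
    φ.Realize v xs ↔ φ.Realize w xs :=
  (Language.BoundedFormula.realize_restrictFreeVar (f := id) (v := fun x => v x) v
    fun _ => rfl).symm.trans (Language.BoundedFormula.realize_restrictFreeVar w fun x => h x x.2)

section OrbitClasses

open Topology

theorem mem_of_isClosed_of_forall_finset_agree {F : Type u} {X : Set (Set F)} {C : Set X}
    (hC : IsClosed[typeSetTop X] C) {p : X}
    (happrox : ∀ I : Finset F, ∃ q ∈ C, ∀ φ ∈ I, (φ ∈ (q : Set F) ↔ φ ∈ (p : Set F))) :
    p ∈ C := by
  obtain ⟨K, hK, rfl⟩ := isClosed_induced_iff.mp hC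
  by_contra hp
  obtain ⟨I, u, hpu, huK⟩ := isOpen_pi_iff.mp hK.isOpen_compl _ hp
  obtain ⟨q, hqK, hqp⟩ := happrox I
  refine huK (fun φ hφ => ?_) hqK
  show (q : Set F).boolIndicator φ ∈ u φ
  rw [Set.boolIndicator_eq_boolIndicator (hqp φ hφ)]
  exact (hpu φ hφ).2

theorem mk_sum_self_lt {ι : Type u} (hκ : ℵ₀ < κ) (hι : #ι < κ) : #(ι ⊕ ι) < κ := by
  simpa using add_lt_of_lt hκ.le hι hι

theorem IsMonster.exists_fix_map_of_tpOver_eq (hM : IsMonster κ L M) {ι : Type u}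
    (hι : #ι < κ) {c d d' : ι → M} (h : tpOver (L := L) c d = tpOver c d') :
    ∃ f : M ≃[L] M, (∀ i, f (c i) = c i) ∧ ∀ i, f (d i) = d' i := by
  obtain ⟨f, hf⟩ := hM.2.1 _ (Sum.elim d c) (Sum.elim d' c) (mk_sum_self_lt κ hM.1 hι)
    fun φ => Set.ext_iff.mp h φ
  exact ⟨f, fun i => hf (Sum.inr i), fun i => hf (Sum.inl i)⟩

theorem tpOver_mem_iff_of_eqOn_freeVar {ι : Type u} [DecidableEq ι] {c d d' : ι → M}
    {φ : L.Formula (ι ⊕ ι)} (h : ∀ i, Sum.inl i ∈ φ.freeVarFinset → d i = d' i) :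
    φ ∈ tpOver c d ↔ φ ∈ tpOver c d' :=
  Language.BoundedFormula.realize_congr_freeVar (v := Sum.elim d c) (w := Sum.elim d' c) φ fun
    | Sum.inl i, hi => h i hi
    | Sum.inr _, _ => rfl

variable {γ : Type u} (pE : Set (L.Formula (γ ⊕ γ))) (a : γ → M)
variable {V β : Type u} {pS : Set (L.Formula (V ⊕ β))} {bp : β → M}

theorem flat_injective {ι : Type u} :
    Function.Injective (flat : (ι → SolT pS bp) → ι × V → M) :=
  fun _ _ h => funext fun i => Subtype.ext <| funext fun v => congrFun h (i, v)

variable {pE a} {hInv : SolInv pE a pS bp} {ιb : Type u} {b : ιb → SolT pS bp}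

theorem IsLascarTuple.mem_of_smul_eq_self (hb : IsLascarTuple κ pE a hInv b)
    {τ : GS pE a hInv} (hτ : τ • b = b) : τ ∈ AutfLS κ pE a hInv :=
  (hb.2 τ).mpr (by rw [hτ]; exact LEq.refl κ pE a _)

theorem IsLascarTuple.projb_eq_of_smul_eq (hb : IsLascarTuple κ pE a hInv b)
    {σ τ : GS pE a hInv} (h : σ • b = τ • b) :
    projb κ pE a hInv σ = projb κ pE a hInv τ :=
  QuotientGroup.eq.mpr <| hb.mem_of_smul_eq_self κ (by rw [mul_smul, ← h, inv_smul_smul])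

theorem mem_of_projb_eq {H : Subgroup (GS pE a hInv)} (hLH : AutfLS κ pE a hInv ≤ H)
    {h σ : GS pE a hInv} (hh : h ∈ H) (he : projb κ pE a hInv h = projb κ pE a hInv σ) :
    σ ∈ H :=
  (H.mul_mem_cancel_left (inv_mem hh)).mp (hLH (QuotientGroup.eq.mp he))

theorem IsLascarTuple.projb_eq_of_tpOver_eq (hM : IsMonster κ L M) (hV : #V < κ)
    (hb : IsLascarTuple κ pE a hInv b) (hbdcl : eInDclTuple pE a (flat b)) {σ τ : GS pE a hInv}
    (h : tpOver (L := L) (flat b) (flat (σ • b)) = tpOver (flat b) (flat (τ • b))) :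
    projb κ pE a hInv σ = projb κ pE a hInv τ := by
  have hbsmall : #(ιb × V) < κ := by simpa using mul_lt_of_lt hM.1.le hb.1 hV
  obtain ⟨f, hfb, hfσ⟩ := hM.exists_fix_map_of_tpOver_eq κ hbsmall h
  set ρ := toGS pE a hInv ⟨f, hbdcl f hfb⟩
  have hρb : ρ • b = b := flat_injective (funext hfb)
  have hρσb : (ρ * σ) • b = τ • b := flat_injective (by rw [mul_smul]; exact funext hfσ)
  have hρ : ρ ∈ AutfLS κ pE a hInv := hb.mem_of_smul_eq_self κ hρb
  calc projb κ pE a hInv σ = projb κ pE a hInv (ρ * σ) := QuotientGroup.eq.mpr <| by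
        simpa [mul_assoc] using (AutfLS_normal κ pE a hInv).conj_mem' ρ hρ σ
    _ = projb κ pE a hInv τ := hb.projb_eq_of_smul_eq κ hρσb

variable (hInv b) in
def tpSb (σ : GS pE a hInv) : ↥(Sb pE a b) :=
  ⟨tpOver (flat b) (flat (σ • b)), by
    obtain ⟨g, hg⟩ := σ.2
    exact ⟨g, by rw [flat_smul_of_res pE a hInv hg b]⟩⟩

theorem nub_tpSb (hM : IsMonster κ L M) (hV : #V < κ) (hb : IsLascarTuple κ pE a hInv b)
    (hbdcl : eInDclTuple pE a (flat b)) (σ : GS pE a hInv) :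
    nub κ pE a hInv b (tpSb hInv b σ) = projb κ pE a hInv σ := by
  have hg := (Set.mem_range.mp (tpSb hInv b σ).2).choose_spec
  refine hb.projb_eq_of_tpOver_eq κ hM hV hbdcl ?_
  rw [flat_toGS_smul]
  exact hg

theorem mem_of_isClosed_image_projb (hM : IsMonster κ L M) (hV : #V < κ)
    (hb : IsLascarTuple κ pE a hInv b) (hbdcl : eInDclTuple pE a (flat b))
    {H : Subgroup (GS pE a hInv)} (hLH : AutfLS κ pE a hInv ≤ H)
    (hcl : IsClosed[galTopb κ pE a hInv b] (projb κ pE a hInv '' H)) {σ : GS pE a hInv}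
    (happrox : ∀ J : Finset ιb, ∃ h ∈ H, ∀ j ∈ J, h • b j = σ • b j) :
    σ ∈ H := by
  classical
  have hσ : tpSb hInv b σ ∈ nub κ pE a hInv b ⁻¹' (projb κ pE a hInv '' H) := by
    refine mem_of_isClosed_of_forall_finset_agree (isClosed_coinduced.mp hcl) fun I => ?_
    obtain ⟨h, hH, hhσ⟩ := happrox <|
      I.biUnion fun φ => φ.freeVarFinset.image (Sum.elim Prod.fst Prod.fst)
    refine ⟨tpSb hInv b h, ⟨h, hH, (nub_tpSb κ hM hV hb hbdcl h).symm⟩, fun φ hφ => ?_⟩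
    refine tpOver_mem_iff_of_eqOn_freeVar fun ⟨j, v⟩ hjv => ?_
    have hj := hhσ j <| Finset.mem_biUnion.mpr ⟨φ, hφ, Finset.mem_image_of_mem _ hjv⟩
    exact congrFun (congrArg Subtype.val hj) v
  obtain ⟨h, hH, hhσ⟩ := hσ
  exact mem_of_projb_eq κ hLH hH (hhσ.trans (nub_tpSb κ hM hV hb hbdcl σ))

end OrbitClasses

section Statements

variable {γ : Type u} (pE : Set (L.Formula (γ ⊕ γ))) (a : γ → M)
variable {V β : Type u} {pS : Set (L.Formula (V ⊕ β))} {bp : β → M}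

theorem mem_iff_fixes_orbit_classes (hM : IsMonster κ L M) (hV : #V < κ)
    (hInv : SolInv pE a pS bp)
    {ιb : Type u} (b : ιb → SolT pS bp)
    (hb : IsLascarTuple κ pE a hInv b) (hbdcl : eInDclTuple pE a (flat b))
    (H : Subgroup (GS pE a hInv)) (hLH : AutfLS κ pE a hInv ≤ H)
    (σ : GS pE a hInv) :
    ((@IsClosed _ (galTopb κ pE a hInv b) (projb κ pE a hInv '' ↑H)) →
      ((σ ∈ H ↔ ∀ (ι : Type u), #ι < κ → ∀ c : ι → SolT pS bp,
          orbEq (hInv := hInv) pE a (↑H) c (σ • c)) ∧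
       (σ ∈ H ↔ ∀ (ι : Type u), Finite ι → ∀ c : ι → SolT pS bp,
          orbEq (hInv := hInv) pE a (↑H) c (σ • c)))) ∧
    (σ ∈ H ↔ ∀ (ι : Type u), #ι < κ → ∀ c : ι → SolT pS bp,
        orbEq (hInv := hInv) pE a (↑H) c (σ • c)) := by
  have hsmall : σ ∈ H ↔ ∀ (ι : Type u), #ι < κ → ∀ c : ι → SolT pS bp,
      orbEq (hInv := hInv) pE a (↑H) c (σ • c) := by
    refine ⟨fun hσ _ _ _ => ⟨σ, hσ, rfl⟩, fun hfix => ?_⟩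
    obtain ⟨h, hH, hhb⟩ := hfix ιb hb.1 b
    exact mem_of_projb_eq κ hLH hH (hb.projb_eq_of_smul_eq κ hhb)
  refine ⟨fun hcl => ⟨hsmall, fun hσ _ _ _ => ⟨σ, hσ, rfl⟩, fun hfix => ?_⟩, hsmall⟩
  refine mem_of_isClosed_image_projb κ hM hV hb hbdcl hLH hcl fun J => ?_
  obtain ⟨h, hH, hhb⟩ := hfix J inferInstance fun j => b j
  exact ⟨h, hH, fun j hj => congrFun hhb ⟨j, hj⟩⟩

end Statements

end RelLascar
end

section
/- Assume e ∈ dcl(Σ). Then the subgroups Autf_KP(Σ, e)/Autf_L(Σ, e) and Autf_S(Σ, e)/Autf_L(Σ, e) are closed in the topological group Gal_L(Σ, e). -/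
/- Framework: relativized Lascar groups of a first-order theory over a
hyperimaginary, following "Relativized Galois groups of first order theories
over a hyperimaginary" by H. Lee and J. Lee. -/

open FirstOrder Cardinal Pointwise

universe u

namespace RelLascar

variable {L : FirstOrder.Language.{u, u}} {M : Type u} [L.Structure M]

variable (κ : Cardinal.{u})

/-! A closed set `K ⊆ Gal_L(T, e)` pulls back to a type-definable condition over the model
`N`: `π(f) ∈ K` iff `tp(f(N)/N)` contains every formula common to the types `tp(g(N)/N)` with
`π(g) ∈ K`. Since `b` is a Lascar tuple with `e ∈ dcl(b)`, the preimage under `ν_b` of the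
image of the relativized set is `{tp(f(b)/b) : π(f) ∈ K}`. A type in the closure of this set is
finitely consistent with the condition over `N`, so by saturation it is realized by some
`f(b)` with `π(f) ∈ K`: the set is closed. Take for `K` the closure and the connected component
of the identity. -/

open Topology

theorem mem_closure_pi_iff_finset {F α : Type*} [TopologicalSpace α] [DiscreteTopology α]
    {S : Set (F → α)} {x : F → α} :
    x ∈ closure S ↔ ∀ Φ : Finset F, ∃ y ∈ S, ∀ φ ∈ Φ, y φ = x φ := by
  rw [mem_closure_iff]
  constructor
  · intro h Φ
    obtain ⟨y, hy, hyS⟩ := h ((Φ : Set F).pi fun φ => {x φ})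
      (isOpen_set_pi Φ.finite_toSet fun _ _ => isOpen_discrete _) fun _ _ => rfl
    exact ⟨y, hyS, hy⟩
  · intro h U hU hxU
    obtain ⟨Φ, u, hu, hΦU⟩ := isOpen_pi_iff.mp hU x hxU
    obtain ⟨y, hyS, hy⟩ := h Φ
    exact ⟨y, hΦU fun φ hφ => (hy φ hφ).symm ▸ (hu φ hφ).2, hyS⟩

theorem mem_closure_typeSetTop_iff {F : Type u} {X : Set (Set F)} {A : Set X} {p : X} :
    p ∈ closure[typeSetTop X] A ↔
      ∀ Φ : Finset F, ∃ q ∈ A, ∀ φ ∈ Φ, (φ ∈ (q : Set F) ↔ φ ∈ (p : Set F)) := by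
  let _ := typeSetTop X
  have hind : IsInducing fun (q : X) (φ : F) => (q : Set F).boolIndicator φ := ⟨rfl⟩
  rw [hind.closure_eq_preimage_closure_image, Set.mem_preimage, mem_closure_pi_iff_finset]
  have boolIndicator_eq_iff (s t : Set F) (φ : F) :
      s.boolIndicator φ = t.boolIndicator φ ↔ (φ ∈ s ↔ φ ∈ t) := by
    rw [Set.mem_iff_boolIndicator, Set.mem_iff_boolIndicator, Bool.coe_iff_coe]
  simp only [Set.exists_mem_image, boolIndicator_eq_iff]

section CompleteTypes

variable {ι : Type u} {prm v w : ι → M}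

theorem mem_tpOver {φ : L.Formula (ι ⊕ ι)} :
    φ ∈ tpOver prm v ↔ φ.Realize (Sum.elim v prm) := Iff.rfl

theorem not_mem_tpOver_iff_notMem {φ : L.Formula (ι ⊕ ι)} :
    φ.not ∈ tpOver prm v ↔ φ ∉ tpOver prm v := Language.Formula.realize_not

theorem iSup_mem_tpOver {β : Type*} [Finite β] {f : β → L.Formula (ι ⊕ ι)} :
    Language.Formula.iSup f ∈ tpOver prm v ↔ ∃ i, f i ∈ tpOver prm v :=
  Language.Formula.realize_iSup

theorem relabel_mem_tpOver {ι' : Type u} (σ : ι → ι') {prm v : ι' → M}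
    {φ : L.Formula (ι ⊕ ι)} :
    φ.relabel (Sum.map σ σ) ∈ tpOver prm v ↔ φ ∈ tpOver (prm ∘ σ) (v ∘ σ) := by
  rw [mem_tpOver, Language.Formula.realize_relabel, Sum.elim_comp_map]
  rfl

theorem tpOver_eq_of_subset (h : tpOver (L := L) prm v ⊆ tpOver prm w) :
    tpOver (L := L) prm v = tpOver prm w := by
  refine h.antisymm fun φ hφ => ?_
  by_contra hφv
  exact not_mem_tpOver_iff_notMem.mp (h (not_mem_tpOver_iff_notMem.mpr hφv)) hφ

end CompleteTypes

theorem mem_of_isClosed_typeSetTop {α : Type u} {prm : α → M}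
    {X : Set (Set (L.Formula (α ⊕ α)))} (hX : ∀ q ∈ X, ∃ w : α → M, q = tpOver prm w)
    {A : Set X} (hA : IsClosed[typeSetTop X] A) {p : X}
    (hp : ∀ ψ, (∀ q ∈ A, ψ ∈ (q : Set (L.Formula (α ⊕ α)))) → ψ ∈ (p : Set _)) :
    p ∈ A := by
  classical
  let _ := typeSetTop X
  rw [← closure_eq_iff_isClosed.mpr hA, mem_closure_typeSetTop_iff]
  intro Φ
  by_contra! hsep
  -- the disjunction of the formulas of `Φ`, each negated if it lies in `p`, holds in every
  -- type of `A` but not in `p`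
  let flip (φ : Φ) : L.Formula (α ⊕ α) :=
    if (φ : L.Formula (α ⊕ α)) ∈ (p : Set _) then (φ : L.Formula (α ⊕ α)).not else φ
  have flip_mem_iff (q : X) (φ : Φ) : flip φ ∈ (q : Set _) ↔
      ((φ : L.Formula (α ⊕ α)) ∈ (q : Set _) ↔ (φ : L.Formula (α ⊕ α)) ∉ (p : Set _)) := by
    obtain ⟨w, hw⟩ := hX q q.2
    simp only [flip, hw]
    split_ifs with h <;> simp [not_mem_tpOver_iff_notMem, h]
  obtain ⟨wp, hwp⟩ := hX p p.2
  have hsup : Language.Formula.iSup flip ∈ (p : Set _) := hp _ fun q hq => by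
    obtain ⟨w, hw⟩ := hX q q.2
    obtain ⟨φ, hφΦ, hφ⟩ := hsep q hq
    rw [hw, iSup_mem_tpOver]
    exact ⟨⟨φ, hφΦ⟩, hw ▸ (flip_mem_iff q ⟨φ, hφΦ⟩).mpr (by tauto)⟩
  rw [hwp, iSup_mem_tpOver] at hsup
  obtain ⟨φ, hφ⟩ := hsup
  have := (flip_mem_iff p φ).mp (hwp ▸ hφ)
  tauto

theorem mk_sum_lt {α β : Type u} {κ : Cardinal.{u}} (hκ : ℵ₀ ≤ κ) (hα : #α < κ)
    (hβ : #β < κ) : #(α ⊕ β) < κ := by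
  simpa using Cardinal.add_lt_of_lt hκ hα hβ

theorem mk_prod_lt {α β : Type u} {κ : Cardinal.{u}} (hκ : ℵ₀ ≤ κ) (hα : #α < κ)
    (hβ : #β < κ) : #(α × β) < κ := by
  simpa using Cardinal.mul_lt_of_lt hκ hα hβ

section Saturation

variable {κ} (hM : IsMonster κ L M)
include hM

theorem IsMonster.exists_aut_subset_tpOver {ι : Type u} (hι : #ι < κ) (prm : ι → M)
    {Γ : Set (L.Formula (ι ⊕ ι))}
    (hΓ : ∀ q : Finset (L.Formula (ι ⊕ ι)), ↑q ⊆ Γ → ∃ f : M ≃[L] M,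
      (q : Set (L.Formula (ι ⊕ ι))) ⊆ tpOver prm (f • prm)) :
    ∃ f : M ≃[L] M, Γ ⊆ tpOver prm (f • prm) := by
  classical
  -- add the type of `prm` itself, so that a realization is an automorphic image of `prm`
  let tp₀ : Set (L.Formula (ι ⊕ ι)) :=
    (Language.Formula.relabel Sum.inl) '' {φ : L.Formula ι | φ.Realize prm}
  have relabel_inl_mem_iff (v : ι → M) (φ : L.Formula ι) :
      φ.relabel Sum.inl ∈ tpOver prm v ↔ φ.Realize v := by
    rw [mem_tpOver, Language.Formula.realize_relabel, Sum.elim_comp_inl]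
  obtain ⟨v, hv⟩ := hM.2.2 ι ι prm (Γ ∪ tp₀) hι hι fun q hq => by
    obtain ⟨q₁, q₂, rfl, hq₁, hq₂⟩ := Finset.subset_union_elim hq
    obtain ⟨f, hf⟩ := hΓ q₁ hq₁
    refine ⟨f • prm, fun φ hφ => ?_⟩
    rcases Finset.mem_union.mp hφ with hφ | hφ
    · exact hf hφ
    · obtain ⟨ψ, hψ, rfl⟩ := (hq₂ hφ).1
      exact (relabel_inl_mem_iff _ ψ).mpr
        ((Language.StrongHomClass.realize_formula f ψ).mpr hψ)
  have hsame : SameTp (L := L) prm v := fun φ => by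
    refine ⟨fun h => (relabel_inl_mem_iff v φ).mp (hv _ (Or.inr ⟨φ, h, rfl⟩)), fun h => ?_⟩
    by_contra hn
    exact (relabel_inl_mem_iff v φ.not).mp (hv _ (Or.inr ⟨φ.not, hn, rfl⟩)) h
  obtain ⟨f, hf⟩ := hM.2.1 ι prm v hι hsame
  obtain rfl : f • prm = v := funext hf
  exact ⟨f, fun φ hφ => hv φ (Or.inl hφ)⟩

theorem IsMonster.exists_aut_fix_smul_eq {ι : Type u} (hι : #ι < κ) {c v w : ι → M}
    (h : tpOver (L := L) c v = tpOver c w) : ∃ f : M ≃[L] M, f • c = c ∧ f • v = w := by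
  obtain ⟨f, hf⟩ := hM.2.1 (ι ⊕ ι) (Sum.elim v c) (Sum.elim w c)
    (mk_sum_lt hM.1.le hι hι) fun φ => Set.ext_iff.mp h φ
  exact ⟨f, funext fun i => hf (Sum.inr i), funext fun i => hf (Sum.inl i)⟩

end Saturation

section Classes

variable {γ : Type u} {pE : Set (L.Formula (γ ⊕ γ))} {a : γ → M}

theorem frel_smul_iff {δ : Type u} {pF : Set (L.Formula (δ ⊕ δ))} (f : M ≃[L] M)
    {x y : δ → M} :
    Frel pF (f • x) (f • y) ↔ Frel pF x y := by
  refine forall₂_congr fun φ _ => ?_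
  have : Sum.elim (f • x) (f • y) = f ∘ Sum.elim x y := by
    rw [Sum.comp_elim]; rfl
  rw [this, Language.StrongHomClass.realize_formula]

theorem smul_Fclass {δ : Type u} (pF : Set (L.Formula (δ ⊕ δ))) (f : M ≃[L] M)
    (x : δ → M) :
    f • Fclass pF x = Fclass pF (f • x) := by
  ext y
  rw [Set.mem_smul_set_iff_inv_smul_mem]
  conv_rhs => rw [← smul_inv_smul f y]
  exact (frel_smul_iff f).symm

theorem Fclass_eq_iff {δ : Type u} {pF : Set (L.Formula (δ ⊕ δ))}
    (hF : Equivalence (Frel (M := M) pF)) {x y : δ → M} :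
    Fclass pF x = Fclass pF y ↔ Frel pF x y := by
  refine ⟨fun h => (h ▸ hF.refl y : y ∈ Fclass pF x), fun h => ?_⟩
  ext z
  exact ⟨hF.trans (hF.symm h), hF.trans h⟩

theorem mem_AutE_iff (hE : Equivalence (Frel (M := M) pE)) {f : M ≃[L] M} :
    f ∈ AutE pE a ↔ Frel pE (f • a) a := by
  rw [AutE, MulAction.mem_stabilizer_iff, smul_Fclass, Fclass_eq_iff hE]

variable {κ} (hM : IsMonster κ L M) (hγ : #γ < κ) (hE : Equivalence (Frel (M := M) pE))
include hM hγ hE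

theorem IsMonster.exists_autE_subset_tpOver {ι : Type u} (hι : #ι < κ) (prm : ι → M)
    {Γ : Set (L.Formula (ι ⊕ ι))}
    (hΓ : ∀ q : Finset (L.Formula (ι ⊕ ι)), ↑q ⊆ Γ → ∃ f : Ge pE a,
      (q : Set (L.Formula (ι ⊕ ι))) ⊆ tpOver prm (f • prm)) :
    ∃ f : Ge pE a, Γ ⊆ tpOver prm (f • prm) := by
  classical
  -- realize `Γ` together with `E(f • a, a)`, which is what makes `f` fix `e`
  obtain ⟨f, hf⟩ := hM.exists_aut_subset_tpOver (mk_sum_lt hM.1.le hι hγ)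
    (Sum.elim prm a) (Γ := Language.Formula.relabel (Sum.map Sum.inl Sum.inl) '' Γ ∪
      Language.Formula.relabel (Sum.map Sum.inr Sum.inr) '' pE) fun q hq => by
    obtain ⟨q₁, q₂, rfl, hq₁, hq₂⟩ := Finset.subset_union_elim hq
    obtain ⟨Φ, hΦ, rfl⟩ := Finset.subset_set_image_iff.mp hq₁
    obtain ⟨f, hf⟩ := hΓ Φ hΦ
    refine ⟨f, fun φ hφ => ?_⟩
    rcases Finset.mem_union.mp hφ with hφ | hφ
    · obtain ⟨ψ, hψ, rfl⟩ := Finset.mem_image.mp hφ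
      exact (relabel_mem_tpOver Sum.inl).mpr (hf hψ)
    · obtain ⟨ψ, hψ, rfl⟩ := (hq₂ hφ).1
      exact (relabel_mem_tpOver Sum.inr).mpr ((mem_AutE_iff hE).mp f.2 ψ hψ)
  have hfE : f ∈ AutE pE a := (mem_AutE_iff hE).mpr fun ψ hψ =>
    (relabel_mem_tpOver Sum.inr).mp (hf (Or.inr ⟨ψ, hψ, rfl⟩))
  exact ⟨⟨f, hfE⟩, fun φ hφ => (relabel_mem_tpOver Sum.inl).mp (hf (Or.inl ⟨φ, hφ, rfl⟩))⟩

end Classes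

section StrongTypes

variable {γ : Type u} {pE : Set (L.Formula (γ ⊕ γ))} {a : γ → M}
variable {V β : Type u} {pS : Set (L.Formula (V ⊕ β))} {bp : β → M}
variable {κ} (hM : IsMonster κ L M)
include hM

theorem IsMonster.inv_mul_mem_of_tpOver_eq {ι : Type u} (hι : #ι < κ) {c : ι → M}
    (hc : eInDclTuple pE a c) {H : Subgroup (Ge pE a)} [hHn : H.Normal]
    (hH : ∀ h : Ge pE a, h • c = c → h ∈ H) {f g : Ge pE a}
    (hfg : tpOver (L := L) c (f • c) = tpOver c (g • c)) : f⁻¹ * g ∈ H := by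
  obtain ⟨h₀, hfix, hmap⟩ := hM.exists_aut_fix_smul_eq hι hfg
  let h : Ge pE a := ⟨h₀, hc h₀ (congrFun hfix)⟩
  have hu : ((h * f)⁻¹ * g) • c = c := by
    rw [mul_smul, inv_smul_eq_iff, mul_smul]
    exact hmap.symm
  have hfg : f⁻¹ * g = (f⁻¹ * h * f) * ((h * f)⁻¹ * g) := by group
  rw [hfg]
  exact mul_mem (hHn.conj_mem' h (hH h hfix) f) (hH _ hu)

theorem projT_eq_of_tpOver_eq (N : L.ElementarySubstructure M) (hN : #N < κ)
    (hNdcl : ∀ g : M ≃[L] M, (∀ x ∈ N, g x = x) → g ∈ AutE pE a) {f g : Ge pE a}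
    (h : tpOver (L := L) (Subtype.val : N → M) (f • Subtype.val) =
      tpOver Subtype.val (g • Subtype.val)) :
    projT κ pE a f = projT κ pE a g :=
  QuotientGroup.eq.mpr <| hM.inv_mul_mem_of_tpOver_eq hN (H := AutfL κ pE a)
    (fun σ hσ => hNdcl σ fun x hx => hσ ⟨x, hx⟩)
    (fun _ hh => Subgroup.subset_normalClosure
      ⟨N, hN, hNdcl, fun x hx => congrFun hh ⟨x, hx⟩⟩) h

theorem projS_eq_of_tpOver_eq (hV : #V < κ) (hInv : SolInv pE a pS bp) {ιb : Type u}
    {b : ιb → SolT pS bp} (hb : IsLascarTuple κ pE a hInv b)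
    (hbdcl : eInDclTuple pE a (flat b)) {f g : Ge pE a}
    (h : tpOver (L := L) (flat b) (f • flat b) = tpOver (flat b) (g • flat b)) :
    projS κ pE a hInv f = projS κ pE a hInv g := by
  have := AutfLS_normal κ pE a hInv
  have hmem := hM.inv_mul_mem_of_tpOver_eq (mk_prod_lt hM.1.le hb.1 hV) hbdcl
    (H := (AutfLS κ pE a hInv).comap (toGS pE a hInv)) (fun h hh => (hb.2 _).mpr <| by
      rw [flat_toGS_smul, hh]
      exact LEq.refl κ pE a _) h
  rw [Subgroup.mem_comap, map_mul, map_inv] at hmem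
  exact QuotientGroup.eq.mpr hmem

theorem nuT_eq_projT (N : L.ElementarySubstructure M) (hN : #N < κ)
    (hNdcl : ∀ g : M ≃[L] M, (∀ x ∈ N, g x = x) → g ∈ AutE pE a) (p : SMod pE a N)
    {g : Ge pE a}
    (hg : tpOver (Subtype.val : N → M) (g • Subtype.val) = (p : Set (L.Formula (N ⊕ N)))) :
    nuT κ pE a N p = projT κ pE a g :=
  projT_eq_of_tpOver_eq hM N hN hNdcl ((Set.mem_range.mp p.2).choose_spec.trans hg.symm)

theorem nub_eq_projS (hV : #V < κ) (hInv : SolInv pE a pS bp) {ιb : Type u}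
    {b : ιb → SolT pS bp} (hb : IsLascarTuple κ pE a hInv b)
    (hbdcl : eInDclTuple pE a (flat b)) (p : Sb pE a b)
    {g : Ge pE a}
    (hg : tpOver (flat b) (g • flat b) = (p : Set (L.Formula ((ιb × V) ⊕ (ιb × V))))) :
    nub κ pE a hInv b p = projS κ pE a hInv g :=
  projS_eq_of_tpOver_eq hM hV hInv hb hbdcl ((Set.mem_range.mp p.2).choose_spec.trans hg.symm)

end StrongTypes

section Compactness

variable {γ : Type u} {pE : Set (L.Formula (γ ⊕ γ))} {a : γ → M}
variable {κ} (hM : IsMonster κ L M)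
include hM

theorem projT_mem_of_forall_tpOver (N : L.ElementarySubstructure M) (hN : #N < κ)
    (hNdcl : ∀ g : M ≃[L] M, (∀ x ∈ N, g x = x) → g ∈ AutE pE a) {K : Set (GalT κ pE a)}
    (hK : IsClosed[galTopT κ pE a N] K) {f : Ge pE a}
    (hf : ∀ ψ : L.Formula (N ⊕ N), (∀ g : Ge pE a, projT κ pE a g ∈ K →
      ψ ∈ tpOver (Subtype.val : N → M) (g • Subtype.val)) →
      ψ ∈ tpOver (Subtype.val : N → M) (f • Subtype.val)) :
    projT κ pE a f ∈ K := by
  let _ := typeSetTop (SMod pE a N)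
  let _ := galTopT κ pE a N
  have hW : IsClosed (nuT κ pE a N ⁻¹' K) := hK.preimage continuous_coinduced_rng
  rw [← nuT_eq_projT hM N hN hNdcl ⟨_, f, rfl⟩ rfl]
  refine mem_of_isClosed_typeSetTop (prm := (Subtype.val : N → M)) (X := SMod pE a N)
    (fun q ⟨g, hg⟩ => ⟨g • Subtype.val, hg.symm⟩) hW
    fun ψ hψ => hf ψ fun g hg => hψ (⟨_, g, rfl⟩ : SMod pE a N) ?_
  rwa [Set.mem_preimage, nuT_eq_projT hM N hN hNdcl _ rfl]

variable (hγ : #γ < κ) (hE : Equivalence (Frel (M := M) pE))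
include hγ hE

theorem IsMonster.exists_autE_tpOver_eq {δ α : Type u} (hδ : #δ < κ) (hα : #α < κ)
    (d : δ → M) (c : α → M) (Ψ : Set (L.Formula (δ ⊕ δ))) (g : Ge pE a)
    (happrox : ∀ Φ : Finset (L.Formula (α ⊕ α)), ∃ f : Ge pE a,
      Ψ ⊆ tpOver (L := L) d (f • d) ∧
      ∀ χ ∈ Φ, (χ ∈ tpOver (L := L) c (f • c) ↔ χ ∈ tpOver c (g • c))) :
    ∃ f : Ge pE a,
      Ψ ⊆ tpOver (L := L) d (f • d) ∧ tpOver (L := L) c (f • c) = tpOver c (g • c) := by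
  classical
  obtain ⟨f, hf⟩ := hM.exists_autE_subset_tpOver hγ hE (mk_sum_lt hM.1.le hδ hα)
    (Sum.elim d c) (Γ := Language.Formula.relabel (Sum.map Sum.inl Sum.inl) '' Ψ ∪
      Language.Formula.relabel (Sum.map Sum.inr Sum.inr) '' tpOver c (g • c)) fun q hq => by
    obtain ⟨q₁, q₂, rfl, hq₁, hq₂⟩ := Finset.subset_union_elim hq
    obtain ⟨Φ, hΦ, rfl⟩ := Finset.subset_set_image_iff.mp (hq₂.trans Set.sdiff_subset)
    obtain ⟨f, hfd, hfc⟩ := happrox Φ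
    refine ⟨f, fun φ hφ => ?_⟩
    rcases Finset.mem_union.mp hφ with hφ | hφ
    · obtain ⟨ψ, hψ, rfl⟩ := hq₁ hφ
      exact (relabel_mem_tpOver Sum.inl).mpr (hfd hψ)
    · obtain ⟨χ, hχ, rfl⟩ := Finset.mem_image.mp hφ
      exact (relabel_mem_tpOver Sum.inr).mpr ((hfc χ hχ).mpr (hΦ hχ))
  refine ⟨f, fun ψ hψ => (relabel_mem_tpOver Sum.inl).mp (hf (Or.inl ⟨ψ, hψ, rfl⟩)), ?_⟩
  exact (tpOver_eq_of_subset fun χ hχ =>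
    (relabel_mem_tpOver Sum.inr).mp (hf (Or.inr ⟨χ, hχ, rfl⟩))).symm

theorem exists_projT_mem_tpOver_eq (N : L.ElementarySubstructure M) (hN : #N < κ)
    (hNdcl : ∀ g : M ≃[L] M, (∀ x ∈ N, g x = x) → g ∈ AutE pE a) {K : Set (GalT κ pE a)}
    (hK : IsClosed[galTopT κ pE a N] K) {α : Type u} (hα : #α < κ) (c : α → M) (g : Ge pE a)
    (happrox : ∀ Φ : Finset (L.Formula (α ⊕ α)), ∃ f : Ge pE a, projT κ pE a f ∈ K ∧
      ∀ χ ∈ Φ, (χ ∈ tpOver (L := L) c (f • c) ↔ χ ∈ tpOver c (g • c))) :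
    ∃ f : Ge pE a, projT κ pE a f ∈ K ∧ tpOver (L := L) c (f • c) = tpOver c (g • c) := by
  obtain ⟨f, hfN, hfc⟩ := hM.exists_autE_tpOver_eq hγ hE hN hα Subtype.val c
    {ψ | ∀ f : Ge pE a, projT κ pE a f ∈ K → ψ ∈ tpOver Subtype.val (f • Subtype.val)} g
    fun Φ => by
      obtain ⟨f, hfK, hf⟩ := happrox Φ
      exact ⟨f, fun ψ hψ => hψ f hfK, hf⟩
  exact ⟨f, projT_mem_of_forall_tpOver hM N hN hNdcl hK fun ψ hψ => hfN hψ, hfc⟩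

end Compactness

section Relativize

variable {γ : Type u} (pE : Set (L.Formula (γ ⊕ γ))) (a : γ → M)
variable {V β : Type u} {pS : Set (L.Formula (V ⊕ β))} {bp : β → M}

/-- For `H = Autf_X(𝔠, e)` this is `Autf_X(Σ, e)`. -/
def relativize (hInv : SolInv pE a pS bp) (H : Set (Ge pE a)) : Set (GS pE a hInv) :=
  {σ | ∀ (ι : Type u), #ι < κ → ∀ c : ι → SolT pS bp, ∃ f ∈ H, f • flat c = flat (σ • c)}

variable {κ pE a} {hInv : SolInv pE a pS bp} {H : Set (Ge pE a)}

theorem toGS_mem_relativize {f : Ge pE a} (hf : f ∈ H) :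
    toGS pE a hInv f ∈ relativize κ pE a hInv H :=
  fun _ _ c => ⟨f, hf, (flat_toGS_smul pE a hInv f c).symm⟩

theorem mul_mem_relativize (hH : ∀ f ∈ H, ∀ m ∈ AutfL κ pE a, f * m ∈ H)
    {σ τ : GS pE a hInv} (hσ : σ ∈ relativize κ pE a hInv H) (hτ : τ ∈ AutfLS κ pE a hInv) :
    σ * τ ∈ relativize κ pE a hInv H := by
  intro ι hι c
  obtain ⟨m, hm, hmc⟩ := hτ ι hι c
  obtain ⟨f, hf, hfc⟩ := hσ ι hι (τ • c)
  exact ⟨f * m, hH f hf m hm, by rw [mul_smul, hmc, hfc, mul_smul]⟩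

variable (hM : IsMonster κ L M) (hV : #V < κ) {ιb : Type u} {b : ιb → SolT pS bp}
  (hb : IsLascarTuple κ pE a hInv b) (hbdcl : eInDclTuple pE a (flat b))
include hM hV hb hbdcl

theorem nub_mem_projb_image_relativize_iff (hH : ∀ f ∈ H, ∀ m ∈ AutfL κ pE a, f * m ∈ H)
    (p : Sb pE a b) :
    nub κ pE a hInv b p ∈ projb κ pE a hInv '' relativize κ pE a hInv H ↔
      ∃ f ∈ H,
        tpOver (flat b) (f • flat b) = (p : Set (L.Formula ((ιb × V) ⊕ (ιb × V)))) := by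
  obtain ⟨g, hg : tpOver (flat b) (g • flat b) = _⟩ := p.2
  rw [nub_eq_projS hM hV hInv hb hbdcl p hg]
  constructor
  · rintro ⟨σ, hσ, hσg⟩
    have hgH := mul_mem_relativize hH hσ (QuotientGroup.eq.mp hσg)
    rw [mul_inv_cancel_left] at hgH
    obtain ⟨f, hf, hfb⟩ := hgH ιb hb.1 b
    exact ⟨f, hf, by rw [hfb, flat_toGS_smul, hg]⟩
  · rintro ⟨f, hf, hfp⟩
    exact ⟨toGS pE a hInv f, toGS_mem_relativize hf,
      projS_eq_of_tpOver_eq hM hV hInv hb hbdcl (hfp.trans hg.symm)⟩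

variable (hγ : #γ < κ) (hE : Equivalence (Frel (M := M) pE))
include hγ hE

theorem isClosed_projb_image_relativize (N : L.ElementarySubstructure M) (hN : #N < κ)
    (hNdcl : ∀ g : M ≃[L] M, (∀ x ∈ N, g x = x) → g ∈ AutE pE a) {K : Set (GalT κ pE a)}
    (hK : IsClosed[galTopT κ pE a N] K) :
    IsClosed[galTopb κ pE a hInv b]
      (projb κ pE a hInv '' relativize κ pE a hInv (projT κ pE a ⁻¹' K)) := by
  let _ := typeSetTop (Sb pE a b)
  have hH : ∀ f ∈ projT κ pE a ⁻¹' K, ∀ m ∈ AutfL κ pE a, f * m ∈ projT κ pE a ⁻¹' K :=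
    fun f hf m hm => by rwa [Set.mem_preimage, projT, QuotientGroup.mk_mul_of_mem f hm]
  rw [galTopb, isClosed_coinduced, ← closure_subset_iff_isClosed]
  intro p hp
  obtain ⟨g, hg : tpOver (flat b) (g • flat b) = _⟩ := p.2
  obtain ⟨f, hf, hfp⟩ := exists_projT_mem_tpOver_eq hM hγ hE N hN hNdcl hK
    (mk_prod_lt hM.1.le hb.1 hV) (flat b) g fun Φ => by
      obtain ⟨q, hq, hqp⟩ := mem_closure_typeSetTop_iff.mp hp Φ
      obtain ⟨f, hf, hfq⟩ := (nub_mem_projb_image_relativize_iff hM hV hb hbdcl hH q).mp hq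
      exact ⟨f, hf, by rwa [hfq, hg]⟩
  exact (nub_mem_projb_image_relativize_iff hM hV hb hbdcl hH p).mpr ⟨f, hf, hfp.trans hg⟩

end Relativize

section Statements

variable {γ : Type u} (pE : Set (L.Formula (γ ⊕ γ))) (a : γ → M)
variable {V β : Type u} {pS : Set (L.Formula (V ⊕ β))} {bp : β → M}

theorem autfKPS_autfSS_closed_in_galL (hM : IsMonster κ L M) (hγ : #γ < κ)
    (hE : Equivalence (Frel (M := M) pE)) (hV : #V < κ)
    (hInv : SolInv pE a pS bp)
    {ιb : Type u} (b : ιb → SolT pS bp)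
    (hb : IsLascarTuple κ pE a hInv b) (hbdcl : eInDclTuple pE a (flat b))
    (N : L.ElementarySubstructure M) (hN : #N < κ)
    (hNdcl : ∀ g : M ≃[L] M, (∀ x ∈ N, g x = x) → g ∈ AutE pE a) :
    @IsClosed _ (galTopb κ pE a hInv b)
      (projb κ pE a hInv '' AutfKPSset κ pE a hInv N) ∧
    @IsClosed _ (galTopb κ pE a hInv b)
      (projb κ pE a hInv '' AutfSSset κ pE a hInv N) := by
  let _ := galTopT κ pE a N
  exact ⟨isClosed_projb_image_relativize hM hV hb hbdcl hγ hE N hN hNdcl isClosed_closure,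
    isClosed_projb_image_relativize hM hV hb hbdcl hγ hE N hN hNdcl
      isClosed_connectedComponent⟩

end Statements

end RelLascar
end
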